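/- arXiv:2601.01136 — 2 statements merged into one kernel-verified Lean document; each statement's English description precedes it below -/
import Mathlib

section
/- With β(k) = √(k² − 2V₀) for k > √(2V₀) and V₀ > 0, the function κ₂(k) = −((β+k)² + 2βk)/(3(β+k)) + √(2V₀)/3 satisfies |κ₂'(k)| = (β²+k²)/(β(β+k)), and in fact κ₂'(k) = −(β²+k²)/(β(β+k)) < 0. -/
open Real

theorem kappa2_deriv (V₀ : ℝ) (hV : 0 < V₀) (k : ℝ) (hk : Real.sqrt (2 * V₀) < k) :
    HasDerivAt (fun k : ℝ =>
        -(((Real.sqrt (k^2 - 2*V₀) + k)^2 + 2 * Real.sqrt (k^2 - 2*V₀) * k) /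
          (3 * (Real.sqrt (k^2 - 2*V₀) + k))) + Real.sqrt (2 * V₀) / 3)
      (-((Real.sqrt (k^2 - 2*V₀)^2 + k^2) /
          (Real.sqrt (k^2 - 2*V₀) * (Real.sqrt (k^2 - 2*V₀) + k)))) k ∧
    |-((Real.sqrt (k^2 - 2*V₀)^2 + k^2) /
          (Real.sqrt (k^2 - 2*V₀) * (Real.sqrt (k^2 - 2*V₀) + k)))|
      = (Real.sqrt (k^2 - 2*V₀)^2 + k^2) /
          (Real.sqrt (k^2 - 2*V₀) * (Real.sqrt (k^2 - 2*V₀) + k)) ∧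
    -((Real.sqrt (k^2 - 2*V₀)^2 + k^2) /
          (Real.sqrt (k^2 - 2*V₀) * (Real.sqrt (k^2 - 2*V₀) + k))) < 0 := by
  have h2V : (0:ℝ) < 2 * V₀ := by linarith
  have hsq : Real.sqrt (2*V₀) ^ 2 = 2 * V₀ := Real.sq_sqrt h2V.le
  have hk0 : 0 < k := lt_of_le_of_lt (Real.sqrt_nonneg _) hk
  have hpos : 0 < k^2 - 2*V₀ := by nlinarith [Real.sqrt_nonneg (2*V₀)]
  set β := Real.sqrt (k^2 - 2*V₀) with hβ
  have hβpos : 0 < β := Real.sqrt_pos.mpr hpos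
  have hβk : 0 < β + k := by linarith
  -- derivative of β
  have hinner : HasDerivAt (fun x : ℝ => x^2 - 2*V₀) (2*k) k := by
    simpa using (hasDerivAt_pow 2 k).sub_const (2*V₀)
  have hβ' : HasDerivAt (fun x : ℝ => Real.sqrt (x^2 - 2*V₀)) (k/β) k := by
    have := (Real.hasDerivAt_sqrt (by positivity : k^2 - 2*V₀ ≠ 0)).comp k hinner
    exact this.congr_deriv (by rw [hβ]; field_simp)
  have hβ'' : HasDerivAt (fun x : ℝ => Real.sqrt (x^2 - 2*V₀) + x) (k/β + 1) k :=
    hβ'.add (hasDerivAt_id k)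
  have hN : HasDerivAt (fun x : ℝ => (Real.sqrt (x^2 - 2*V₀) + x)^2
      + 2 * Real.sqrt (x^2 - 2*V₀) * x)
      (2*(β+k)*(k/β+1) + (2*(k/β)*k + 2*β)) k := by
    have h1 : HasDerivAt (fun x : ℝ => (Real.sqrt (x^2 - 2*V₀) + x)^2)
        (2*(β+k)*(k/β+1)) k := by
      have := hβ''.pow 2
      exact this.congr_deriv (by rw [hβ]; ring)
    have h2 : HasDerivAt (fun x : ℝ => 2 * Real.sqrt (x^2 - 2*V₀) * x)
        (2*(k/β)*k + 2*β) k := by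
      have := ((hβ'.const_mul 2).mul (hasDerivAt_id k))
      exact this.congr_deriv (by simp only [id]; field_simp; rw [hβ]; ring)
    exact h1.add h2
  have hD : HasDerivAt (fun x : ℝ => 3 * (Real.sqrt (x^2 - 2*V₀) + x)) (3*(k/β+1)) k :=
    hβ''.const_mul 3
  have hDne : 3 * (β + k) ≠ 0 := by positivity
  have hdiv := hN.div hD (by simpa [hβ] using hDne)
  have hfinal : HasDerivAt (fun x : ℝ =>
      -(((Real.sqrt (x^2 - 2*V₀) + x)^2 + 2 * Real.sqrt (x^2 - 2*V₀) * x) /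
        (3 * (Real.sqrt (x^2 - 2*V₀) + x))) + Real.sqrt (2 * V₀) / 3)
      (-((β^2 + k^2) / (β * (β + k)))) k := by
    have := (hdiv.neg).add_const (Real.sqrt (2*V₀) / 3)
    refine this.congr_deriv ?_
    field_simp
    ring
  refine ⟨hfinal, ?_, ?_⟩
  · rw [abs_neg, abs_of_pos]
    positivity
  · have : 0 < (β^2 + k^2) / (β * (β + k)) := by positivity
    linarith
end

section
/- Given the 2×2 linear recurrence from the one-sided Dirac comb whose transfer matrix has eigenvalues λ₁, λ₂ (λ₁ ≠ λ₂) that are the roots of λ² − (v/w)λ + 1/w = 0, where v = (1−c)w + c + 1, c = iγ/k and w = e^{2iak}, the sequences A_n = [(−c−λ₂+1)λ₁ⁿ + (c+λ₁−1)λ₂ⁿ]/(λ₁−λ₂)·A₀ − c(λ₁ⁿ−λ₂ⁿ)/(λ₁−λ₂)·B₀ and the analogous B_n satisfy the recurrence relations A_n e^{iakn} + B_n e^{−iakn} = A_{n+1}e^{iakn} + B_{n+1}e^{−iakn} and A_n(1+2γ/(ik))e^{iakn} + B_n(−1+2γ/(ik))e^{−iakn} = A_{n+1}e^{iakn} − B_{n+1}e^{−iakn}.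 -/
open Complex
lemma key1 (c w l1 l2 A0 B0 t1 t2 : ℂ) (hw0 : w ≠ 0) (hd : l1 - l2 ≠ 0)
    (hS : w*(l1+l2) = (1-c)*w + c + 1) (hP : w*(l1*l2) = 1) :
    ((-c - l2 + 1)*t1 + (c + l1 - 1)*t2)/(l1-l2)*A0 - c*(t1-t2)/(l1-l2)*B0
      + (c*(t1-t2)/(w*(l1-l2))*A0 + ((c+l1-1)*t1 + (-c-l2+1)*t2)/(l1-l2)*B0)
    = ((-c - l2 + 1)*(l1*t1) + (c + l1 - 1)*(l2*t2))/(l1-l2)*A0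
      - c*((l1*t1)-(l2*t2))/(l1-l2)*B0
      + w*(c*((l1*t1)-(l2*t2))/(w*(l1-l2))*A0
        + ((c+l1-1)*(l1*t1) + (-c-l2+1)*(l2*t2))/(l1-l2)*B0) := by
  field_simp
  linear_combination (-t1*A0 + t2*A0 - w*l1*t1*B0 + w*l2*t2*B0) * hS
    + (t1*A0 - t2*A0 + w*t1*B0 - w*t2*B0) * hP

lemma key2 (c w l1 l2 A0 B0 t1 t2 : ℂ) (hw0 : w ≠ 0) (hd : l1 - l2 ≠ 0)
    (hS : w*(l1+l2) = (1-c)*w + c + 1) (hP : w*(l1*l2) = 1) :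
    (((-c - l2 + 1)*t1 + (c + l1 - 1)*t2)/(l1-l2)*A0 - c*(t1-t2)/(l1-l2)*B0) * (1 - 2*c)
      + (c*(t1-t2)/(w*(l1-l2))*A0 + ((c+l1-1)*t1 + (-c-l2+1)*t2)/(l1-l2)*B0) * (-1 - 2*c)
    = ((-c - l2 + 1)*(l1*t1) + (c + l1 - 1)*(l2*t2))/(l1-l2)*A0
      - c*((l1*t1)-(l2*t2))/(l1-l2)*B0
      - w*(c*((l1*t1)-(l2*t2))/(w*(l1-l2))*A0
        + ((c+l1-1)*(l1*t1) + (-c-l2+1)*(l2*t2))/(l1-l2)*B0) := by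
  field_simp
  linear_combination (-(1-2*c)*t1*A0 + (1-2*c)*t2*A0 + w*l1*t1*B0 - w*l2*t2*B0) * hS
    + (t1*A0 - t2*A0 - w*t1*B0 + w*t2*B0) * hP


theorem dirac_comb_recurrence (a γ k : ℝ) (ha : 0 < a) (hγ : 0 < γ) (hk : 0 < k)
    (c w v lam1 lam2 : ℂ)
    (hc : c = Complex.I * γ / k)
    (hw : w = Complex.exp (2 * Complex.I * a * k))
    (hv : v = (1 - c) * w + c + 1)
    (hlam1 : w * lam1^2 - v * lam1 + 1 = 0)
    (hlam2 : w * lam2^2 - v * lam2 + 1 = 0)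
    (hne : lam1 ≠ lam2)
    (A₀ B₀ : ℂ) (A B : ℕ → ℂ)
    (hA : ∀ n : ℕ, A n = ((-c - lam2 + 1) * lam1^n + (c + lam1 - 1) * lam2^n) / (lam1 - lam2) * A₀
        - c * (lam1^n - lam2^n) / (lam1 - lam2) * B₀)
    (hB : ∀ n : ℕ, B n = w^n * (c * (lam1^n - lam2^n) / (w * (lam1 - lam2)) * A₀
        + ((c + lam1 - 1) * lam1^n + (-c - lam2 + 1) * lam2^n) / (lam1 - lam2) * B₀)) :
    ∀ n : ℕ,
      A n * Complex.exp (Complex.I * a * k * n) + B n * Complex.exp (-Complex.I * a * k * n)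
        = A (n+1) * Complex.exp (Complex.I * a * k * n)
          + B (n+1) * Complex.exp (-Complex.I * a * k * n) ∧
      A n * (1 + 2 * γ / (Complex.I * k)) * Complex.exp (Complex.I * a * k * n)
        + B n * (-1 + 2 * γ / (Complex.I * k)) * Complex.exp (-Complex.I * a * k * n)
        = A (n+1) * Complex.exp (Complex.I * a * k * n)
          - B (n+1) * Complex.exp (-Complex.I * a * k * n) := by
  intro n
  have hk0 : (k:ℂ) ≠ 0 := by exact_mod_cast hk.ne'
  have hw0 : w ≠ 0 := by rw [hw]; exact Complex.exp_ne_zero _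
  have hd : lam1 - lam2 ≠ 0 := sub_ne_zero.mpr hne
  have hS : w * (lam1 + lam2) = (1 - c) * w + c + 1 := by
    have h0 : (lam1 - lam2) * (w * (lam1 + lam2) - ((1 - c) * w + c + 1)) = 0 := by
      linear_combination hlam1 - hlam2 + (lam1 - lam2) * hv
    exact sub_eq_zero.mp ((mul_eq_zero.mp h0).resolve_left hd)
  have hP : w * (lam1 * lam2) = 1 := by
    have h0 : (lam1 - lam2) * (w * (lam1 * lam2) - 1) = 0 := by
      linear_combination lam2 * hlam1 - lam1 * hlam2
    exact sub_eq_zero.mp ((mul_eq_zero.mp h0).resolve_left hd)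
  have hp1 : (1 : ℂ) + 2 * (γ:ℂ) / (Complex.I * (k:ℂ)) = 1 - 2*c := by
    rw [hc]; field_simp; linear_combination (2*(γ:ℂ)) * Complex.I_sq
  have hp2 : (-1 : ℂ) + 2 * (γ:ℂ) / (Complex.I * (k:ℂ)) = -1 - 2*c := by
    rw [hc]; field_simp; linear_combination (2*(γ:ℂ)) * Complex.I_sq
  have hEF : Complex.exp (-Complex.I*a*k*n) * w^n = Complex.exp (Complex.I*a*k*n) := by
    rw [hw, ← Complex.exp_nat_mul, ← Complex.exp_add]
    congr 1
    push_cast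
    ring
  have hk1 := key1 c w lam1 lam2 A₀ B₀ (lam1^n) (lam2^n) hw0 hd hS hP
  have hk2 := key2 c w lam1 lam2 A₀ B₀ (lam1^n) (lam2^n) hw0 hd hS hP
  constructor
  · rw [hA n, hA (n+1), hB n, hB (n+1)]
    linear_combination Complex.exp (Complex.I*a*k*n) * hk1
      + ((c * (lam1^n - lam2^n) / (w * (lam1 - lam2)) * A₀
          + ((c + lam1 - 1) * lam1^n + (-c - lam2 + 1) * lam2^n) / (lam1 - lam2) * B₀)
        - w * (c * (lam1^(n+1) - lam2^(n+1)) / (w * (lam1 - lam2)) * A₀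
          + ((c + lam1 - 1) * lam1^(n+1) + (-c - lam2 + 1) * lam2^(n+1)) / (lam1 - lam2) * B₀)) * hEF
  · rw [hp1, hp2, hA n, hA (n+1), hB n, hB (n+1)]
    linear_combination Complex.exp (Complex.I*a*k*n) * hk2
      + ((-1 - 2*c) * (c * (lam1^n - lam2^n) / (w * (lam1 - lam2)) * A₀
          + ((c + lam1 - 1) * lam1^n + (-c - lam2 + 1) * lam2^n) / (lam1 - lam2) * B₀)
        + w * (c * (lam1^(n+1) - lam2^(n+1)) / (w * (lam1 - lam2)) * A₀
          + ((c + lam1 - 1) * lam1^(n+1) + (-c - lam2 + 1) * lam2^(n+1)) / (lam1 - lam2) * B₀)) * hEF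
end
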